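/- Let a ∈ ℝ, m > 0, and for r > |a| let r̃ be the positive root of r̃⁴ − (r²−a²)r̃² − a²z² = 0 with r² = x²+y²+z². Define H = m r̃³/(r̃⁴ + a²z²). Then |H − m/r| ≤ C m (m+|a|)² / r³ for r ≥ 2(m+|a|), for some universal constant C; in particular H = m/r + O(r⁻³) as r → ∞. -/

import Mathlib

/-!
The quartic factors the denominator as `t⁴ + a²z² = t² D` with `D = 2t² − r² + a²`, so
`H = m t / D`, and it pins `t²` between `r² − a²` and `r²`. Hence `D ≥ r² − a² ≥ 3r²/4`, and
`H − m/r = m ((r − t)(r + 2t) − a²) / (D r)` has numerator at most `m a²` in absolute value,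
because `(r − t)(r + t) = r² − t²` lies in `[0, a²]`.
-/

lemma abs_sq_add_mul_sub_two_sq_sub_le {r t b : ℝ} (ht : 0 ≤ t) (htr : t ≤ r)
    (hb : r ^ 2 - t ^ 2 ≤ b) : |r ^ 2 + t * r - 2 * t ^ 2 - b| ≤ b := by
  have hfac : r ^ 2 + t * r - 2 * t ^ 2 = (r - t) * (r + 2 * t) := by ring
  have hsub : 0 ≤ r - t := sub_nonneg.2 htr
  rw [abs_le, hfac]
  constructor
  · nlinarith [mul_nonneg hsub (by linarith : 0 ≤ r + 2 * t)]
  · nlinarith [mul_le_mul_of_nonneg_left (by linarith : r + 2 * t ≤ 2 * (r + t)) hsub]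

section KerrQuartic

variable {a r z t : ℝ}

lemma kerr_quartic_sq_le (hquartic : t ^ 4 - (r ^ 2 - a ^ 2) * t ^ 2 - a ^ 2 * z ^ 2 = 0)
    (hz : z ^ 2 ≤ r ^ 2) : t ^ 2 ≤ r ^ 2 := by
  nlinarith [hquartic, sq_nonneg t, sq_nonneg a, mul_nonneg (sq_nonneg a) (sub_nonneg.2 hz)]

lemma kerr_quartic_sub_sq_le (hquartic : t ^ 4 - (r ^ 2 - a ^ 2) * t ^ 2 - a ^ 2 * z ^ 2 = 0)
    (ht : 0 < t) : r ^ 2 - a ^ 2 ≤ t ^ 2 := by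
  nlinarith [hquartic, mul_pos ht ht, sq_nonneg (a * z)]

lemma kerr_quartic_denom_eq (hquartic : t ^ 4 - (r ^ 2 - a ^ 2) * t ^ 2 - a ^ 2 * z ^ 2 = 0) :
    t ^ 4 + a ^ 2 * z ^ 2 = t ^ 2 * (2 * t ^ 2 - r ^ 2 + a ^ 2) := by
  linear_combination -hquartic

theorem abs_kerr_potential_sub_newtonian_le {m : ℝ} (hm : 0 ≤ m) (hr : 0 < r)
    (ha : 4 * a ^ 2 ≤ r ^ 2) (hz : z ^ 2 ≤ r ^ 2) (ht : 0 < t)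
    (hquartic : t ^ 4 - (r ^ 2 - a ^ 2) * t ^ 2 - a ^ 2 * z ^ 2 = 0) :
    |m * t ^ 3 / (t ^ 4 + a ^ 2 * z ^ 2) - m / r| ≤ 4 / 3 * m * a ^ 2 / r ^ 3 := by
  have hupper := kerr_quartic_sq_le hquartic hz
  have hlower := kerr_quartic_sub_sq_le hquartic ht
  set D := 2 * t ^ 2 - r ^ 2 + a ^ 2 with hD
  have hDge : 3 / 4 * r ^ 2 ≤ D := by linarith
  have hDpos : 0 < D := by nlinarith
  have hdiff : m * t ^ 3 / (t ^ 4 + a ^ 2 * z ^ 2) - m / r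
      = m * (r ^ 2 + t * r - 2 * t ^ 2 - a ^ 2) / (D * r) := by
    rw [kerr_quartic_denom_eq hquartic, ← hD]
    field_simp
    rw [hD]
    ring
  have htr : t ≤ r := (pow_le_pow_iff_left₀ ht.le hr.le two_ne_zero).1 hupper
  calc |m * t ^ 3 / (t ^ 4 + a ^ 2 * z ^ 2) - m / r|
      = m * |r ^ 2 + t * r - 2 * t ^ 2 - a ^ 2| / (D * r) := by
        rw [hdiff, abs_div, abs_mul, abs_of_nonneg hm, abs_of_pos (mul_pos hDpos hr)]
    _ ≤ m * a ^ 2 / (3 / 4 * r ^ 2 * r) := by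
        gcongr
        exact abs_sq_add_mul_sub_two_sq_sub_le ht.le htr (by linarith)
    _ = 4 / 3 * m * a ^ 2 / r ^ 3 := by field_simp

end KerrQuartic

/-- Asymptotic expansion of the Kerr-Schild potential: there is a universal
constant `C > 0` such that for all mass `m > 0`, spin `a`, and points with
Euclidean radius `r ≥ 2(m+|a|)`, the potential `H = m r̃³/(r̃⁴ + a²z²)` satisfies
`|H − m/r| ≤ C m (m+|a|)² / r³`. -/
theorem kerr_schild_potential_expansion :
    ∃ C : ℝ, 0 < C ∧ ∀ m a x y z rt : ℝ, 0 < m →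
      2 * (m + |a|) ≤ Real.sqrt (x ^ 2 + y ^ 2 + z ^ 2) → 0 < rt →
      rt ^ 4 - ((x ^ 2 + y ^ 2 + z ^ 2) - a ^ 2) * rt ^ 2 - a ^ 2 * z ^ 2 = 0 →
      |m * rt ^ 3 / (rt ^ 4 + a ^ 2 * z ^ 2) - m / Real.sqrt (x ^ 2 + y ^ 2 + z ^ 2)| ≤
        C * m * (m + |a|) ^ 2 / Real.sqrt (x ^ 2 + y ^ 2 + z ^ 2) ^ 3 := by
  refine ⟨4 / 3, by norm_num, fun m a x y z rt hm hr ht hquartic => ?_⟩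
  set r := Real.sqrt (x ^ 2 + y ^ 2 + z ^ 2)
  have hr_sq : r ^ 2 = x ^ 2 + y ^ 2 + z ^ 2 := Real.sq_sqrt (by positivity)
  rw [← hr_sq] at hquartic
  have hr_pos : 0 < r := by linarith [abs_nonneg a]
  have ha : 4 * a ^ 2 ≤ r ^ 2 := by nlinarith [sq_abs a, abs_nonneg a]
  have hz : z ^ 2 ≤ r ^ 2 := by nlinarith [sq_nonneg x, sq_nonneg y]
  have ha_le : a ^ 2 ≤ (m + |a|) ^ 2 := by nlinarith [sq_abs a, abs_nonneg a]
  calc _ ≤ 4 / 3 * m * a ^ 2 / r ^ 3 :=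
        abs_kerr_potential_sub_newtonian_le hm.le hr_pos ha hz ht hquartic
    _ ≤ 4 / 3 * m * (m + |a|) ^ 2 / r ^ 3 := by gcongr
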